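/- Let H be a self-similar subgroup of Ω and let N be a normal subgroup of H contained in the stabilizer of the first level of the tree. If H/N is torsion-free, then H is torsion-free. -/

import Mathlib

/-! A torsion element `h` of `H` has a power in `N`, so it lies in `N` because `H/N` is
torsion-free, and therefore fixes the first level. Its sections `h|₀, h|₁` then lie in `H`
by self-similarity and satisfy `(h|ₓ)^m = (h^m)|ₓ = 1`, so they are torsion elements of `H`
again. Induction on the length of a vertex shows that `h` fixes every vertex. -/

namespace BinTree

/-- Vertices of the infinite rooted binary tree: finite words over `{0,1}`. -/
abbrev Vertex : Type := List Bool

/-- A function on vertices is a tree automorphism function if it preserves lengths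
(levels) and prefixes. -/
def IsTreeAutFun (f : Vertex → Vertex) : Prop :=
  (∀ v, (f v).length = v.length) ∧ ∀ v w : Vertex, (f (v ++ w)).take v.length = f v

/-- `Ω`: the automorphism group of the infinite rooted binary tree, realized as the
subgroup of permutations of the set of vertices preserving the tree structure. -/
def TreeAut : Subgroup (Equiv.Perm Vertex) where
  carrier := {e | IsTreeAutFun ⇑e}
  one_mem' := ⟨fun _ => rfl, fun v w => by
    simpa using List.take_left (l₁ := v) (l₂ := w)⟩
  mul_mem' := by
    rintro a b ha hb
    obtain ⟨ha1, ha2⟩ := ha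
    obtain ⟨hb1, hb2⟩ := hb
    refine ⟨fun v => ?_, fun v w => ?_⟩
    · simp [Equiv.Perm.mul_apply, ha1, hb1]
    · have hb' : b (v ++ w) = b v ++ (b (v ++ w)).drop v.length := by
        conv_lhs => rw [← List.take_append_drop v.length (b (v ++ w)), hb2]
      have hlen : (b v).length = v.length := hb1 v
      calc ((a * b) (v ++ w)).take v.length
          = (a (b v ++ (b (v ++ w)).drop v.length)).take v.length := by
            rw [Equiv.Perm.mul_apply, ← hb']
        _ = a (b v) := by rw [← hlen]; exact ha2 _ _
        _ = (a * b) v := rfl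
  inv_mem' := by
    intro a ha
    obtain ⟨ha1, ha2⟩ := ha
    show IsTreeAutFun ⇑a⁻¹
    have hlen : ∀ v : Vertex, (a⁻¹ v).length = v.length := by
      intro v
      have h := ha1 (a⁻¹ v)
      rw [← Equiv.Perm.mul_apply, mul_inv_cancel, Equiv.Perm.one_apply] at h
      exact h.symm ▸ rfl
    refine ⟨hlen, fun v w => ?_⟩
    have htl : ((a⁻¹ (v ++ w)).take v.length).length = v.length := by
      rw [List.length_take, hlen, List.length_append]
      omega
    have key : a ((a⁻¹ (v ++ w)).take v.length) = v := by
      have h2 := ha2 ((a⁻¹ (v ++ w)).take v.length) ((a⁻¹ (v ++ w)).drop v.length)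
      rw [List.take_append_drop, htl, ← Equiv.Perm.mul_apply, mul_inv_cancel, Equiv.Perm.one_apply] at h2
      rw [← h2]
      simpa using List.take_left (l₁ := v) (l₂ := w)
    have h3 := congrArg (⇑a⁻¹) key
    rwa [← Equiv.Perm.mul_apply, inv_mul_cancel, Equiv.Perm.one_apply] at h3

/-- wreath recursion, forward map: `(g,h)σᵗ` -/
def wrFun (g h : Vertex → Vertex) (t : Bool) : Vertex → Vertex
  | [] => []
  | x :: v => (xor x t) :: (cond x (h v) (g v))

/-- wreath recursion, inverse map -/
def wrFunInv (g h : Vertex → Vertex) (t : Bool) : Vertex → Vertex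
  | [] => []
  | y :: w => (xor y t) :: (cond (xor y t) (h w) (g w))

/-- `(g,h)σᵗ` as a permutation of the vertices. -/
def wrPerm (g h : Equiv.Perm Vertex) (t : Bool) : Equiv.Perm Vertex where
  toFun := wrFun ⇑g ⇑h t
  invFun := wrFunInv ⇑g.symm ⇑h.symm t
  left_inv := by
    intro v
    cases v with
    | nil => rfl
    | cons x v => cases x <;> cases t <;> simp [wrFun, wrFunInv]
  right_inv := by
    intro v
    cases v with
    | nil => rfl
    | cons x v => cases x <;> cases t <;> simp [wrFun, wrFunInv]

/-- The element `(g,h)σᵗ` of `Ω`: acts on the first level by `σᵗ` (where `σ` is the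
swap of the two level-one subtrees), with section `g` at the vertex `0` and section
`h` at the vertex `1`.  Thus `(γ₀,γ₁)τ` of the wreath recursion
`Ω ≃ (Ω × Ω) ⋊ S₂` is `wr γ₀ γ₁ t` (`t = true` iff `τ = σ`). -/
def wr (g h : TreeAut) (t : Bool) : TreeAut :=
  ⟨wrPerm g.1 h.1 t, by
    have hg : IsTreeAutFun ⇑g.1 := g.2
    have hh : IsTreeAutFun ⇑h.1 := h.2
    constructor
    · intro v
      cases v with
      | nil => rfl
      | cons x v =>
        cases x <;> simp [wrPerm, wrFun, hg.1, hh.1]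
    · intro v w
      cases v with
      | nil => simp [wrPerm, wrFun]
      | cons x v =>
        cases x <;> simp [wrPerm, wrFun, hg.2, hh.2]⟩

/-- Application of a tree automorphism to a vertex. -/
def ap (γ : TreeAut) (v : Vertex) : Vertex := γ.1 v

/-- The permutation induced by `γ ∈ Ω` on level `n` of the tree. -/
def levelPerm (n : ℕ) (γ : TreeAut) : Equiv.Perm (List.Vector Bool n) where
  toFun v := ⟨γ.1 v.1, by
    have h : IsTreeAutFun ⇑γ.1 := γ.2
    rw [h.1 v.1]; exact v.2⟩
  invFun v := ⟨γ.1.symm v.1, by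
    have h : IsTreeAutFun ⇑γ.1 := γ.2
    have h2 := h.1 (γ.1.symm v.1)
    rw [Equiv.apply_symm_apply] at h2
    exact h2.symm.trans v.2⟩
  left_inv v := Subtype.ext (Equiv.symm_apply_apply _ _)
  right_inv v := Subtype.ext (Equiv.apply_symm_apply _ _)

/-- Restriction to level `n` as a group homomorphism. -/
def levelHom (n : ℕ) : TreeAut →* Equiv.Perm (List.Vector Bool n) where
  toFun := levelPerm n
  map_one' := Equiv.ext fun v => Subtype.ext rfl
  map_mul' := fun g h => Equiv.ext fun v => Subtype.ext rfl

/-- `sgn_n`: the sign of the permutation induced on level `n`. -/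
def sgn (n : ℕ) (γ : TreeAut) : ℤˣ := Equiv.Perm.sign (levelPerm n γ)

/-- An odometer: acts as a single `2^n`-cycle on each level `n ≥ 1`. -/
def IsOdometer (γ : TreeAut) : Prop :=
  ∀ n : ℕ, 1 ≤ n → (levelPerm n γ).IsCycle ∧ (levelPerm n γ).support = Finset.univ

/-- The profinite topology on `Ω`: the coarsest topology making all level
restrictions (to the discrete finite groups) continuous. -/
instance : TopologicalSpace TreeAut :=
  ⨅ n : ℕ, TopologicalSpace.induced (levelPerm n) ⊥

/-- A vertex `w` is in a stable cycle of `γ` of length `k`: its `γ`-orbit has exactly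
`k` elements, and for every level `m` above the level of `w`, all level-`m` vertices
lying above this orbit are in one single `γ`-cycle (necessarily of length
`2^(m - n) * k`, which we record via the periodicity condition). -/
def InStableCycle (γ : TreeAut) (w : Vertex) (k : ℕ) : Prop :=
  0 < k ∧ ap (γ ^ k) w = w ∧ (∀ j : ℕ, 0 < j → j < k → ap (γ ^ j) w ≠ w) ∧
  (∀ u : Vertex, w.length < u.length → (∃ i : ℕ, u.take w.length = ap (γ ^ i) w) →
    (ap (γ ^ (2 ^ (u.length - w.length) * k)) u = u ∧
      ∀ u' : Vertex, u'.length = u.length →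
        (∃ i : ℕ, u'.take w.length = ap (γ ^ i) w) → ∃ j : ℕ, ap (γ ^ j) u = u'))

/-- Self-similar subgroup: closed under taking sections (here the section of `γ` at
the first-level vertex `x` is characterized by `(xv)γ = (x)γ ⬝ (v)γₓ`). -/
def SelfSimilar (H : Subgroup TreeAut) : Prop :=
  ∀ γ ∈ H, ∀ x : Bool, ∀ δ : TreeAut,
    (∀ v : Vertex, ap γ (x :: v) = ap γ [x] ++ ap δ v) → δ ∈ H

theorem length_ap (g : TreeAut) (v : Vertex) : (ap g v).length = v.length := g.2.1 v

theorem ap_mul (g h : TreeAut) (v : Vertex) : ap (g * h) v = ap g (ap h v) := rfl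

theorem ap_inv_ap (g : TreeAut) (v : Vertex) : ap g⁻¹ (ap g v) = v := g.1.symm_apply_apply v

theorem ap_ap_inv (g : TreeAut) (v : Vertex) : ap g (ap g⁻¹ v) = v := g.1.apply_symm_apply v

theorem ext_ap {g h : TreeAut} (hgh : ∀ v, ap g v = ap h v) : g = h :=
  Subtype.ext (Equiv.ext hgh)

theorem take_ap_append (g : TreeAut) (u w : Vertex) :
    (ap g (u ++ w)).take u.length = ap g u :=
  g.2.2 u w

theorem ap_append_eq_append_drop (g : TreeAut) (u w : Vertex) :
    ap g (u ++ w) = ap g u ++ (ap g (u ++ w)).drop u.length := by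
  conv_lhs => rw [← List.take_append_drop u.length (ap g (u ++ w)), take_ap_append]

/-- The inverse of the section `g|ᵤ` is the section `g⁻¹|_(g u)`. -/
def sectionAt (g : TreeAut) (u : Vertex) : TreeAut :=
  ⟨{ toFun := fun w => (ap g (u ++ w)).drop u.length
     invFun := fun w => (ap g⁻¹ (ap g u ++ w)).drop (ap g u).length
     left_inv := fun w => by
       simp only
       rw [← ap_append_eq_append_drop, ap_inv_ap, length_ap, List.drop_left]
     right_inv := fun w => by
       have hinv : ap g⁻¹ (ap g u ++ w) = u ++ (ap g⁻¹ (ap g u ++ w)).drop (ap g u).length := by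
         conv_lhs => rw [ap_append_eq_append_drop g⁻¹, ap_inv_ap]
       simp only
       rw [← hinv, ap_ap_inv, List.drop_left' (length_ap g u)] },
   fun w => by simp [length_ap], fun v w => by
     show ((ap g (u ++ (v ++ w))).drop u.length).take v.length = (ap g (u ++ v)).drop u.length
     rw [List.take_drop, ← List.append_assoc, ← List.length_append, take_ap_append g (u ++ v) w]⟩

theorem ap_append (g : TreeAut) (u w : Vertex) :
    ap g (u ++ w) = ap g u ++ ap (sectionAt g u) w :=
  ap_append_eq_append_drop g u w

theorem sectionAt_one (u : Vertex) : sectionAt 1 u = 1 :=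
  ext_ap fun _ => List.drop_left

theorem sectionAt_mul (g h : TreeAut) (u : Vertex) :
    sectionAt (g * h) u = sectionAt g (ap h u) * sectionAt h u := by
  refine ext_ap fun w => List.append_cancel_left (as := ap (g * h) u) ?_
  rw [← ap_append, ap_mul, ap_append h, ap_append g, ap_mul, ap_mul]

theorem sectionAt_pow_of_ap_eq {g : TreeAut} {u : Vertex} (hu : ap g u = u) (k : ℕ) :
    sectionAt (g ^ k) u = sectionAt g u ^ k := by
  induction k with
  | zero => exact sectionAt_one u
  | succ k ih => rw [pow_succ, sectionAt_mul, hu, ih, pow_succ]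

theorem SelfSimilar.sectionAt_mem {H : Subgroup TreeAut} (hss : SelfSimilar H) {g : TreeAut}
    (hg : g ∈ H) (x : Bool) : sectionAt g [x] ∈ H :=
  hss g hg x _ (ap_append g [x])

theorem SelfSimilar.ap_eq_self_of_pow_eq_one {H : Subgroup TreeAut} (hss : SelfSimilar H)
    {m : ℕ} (hfix : ∀ g ∈ H, g ^ m = 1 → ∀ x : Bool, ap g [x] = [x]) (v : Vertex) :
    ∀ g ∈ H, g ^ m = 1 → ap g v = v := by
  induction v with
  | nil => exact fun g _ _ => List.eq_nil_of_length_eq_zero (length_ap g [])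
  | cons x w ih =>
    intro g hg hgm
    have hx := hfix g hg hgm x
    have hsec : sectionAt g [x] ^ m = 1 := by
      rw [← sectionAt_pow_of_ap_eq hx, hgm, sectionAt_one]
    rw [← List.singleton_append, ap_append, hx, ih _ (hss.sectionAt_mem hg x) hsec]

theorem torsion_free_of_quotient_general (H : Subgroup TreeAut) (hss : SelfSimilar H)
    (N : Subgroup TreeAut)
    (hstab : ∀ x ∈ N, ∀ b : Bool, ap x [b] = [b])
    (htf : ∀ h ∈ H, (∃ m : ℕ, 0 < m ∧ h ^ m ∈ N) → h ∈ N) :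
    ∀ h ∈ H, ∀ m : ℕ, 0 < m → h ^ m = 1 → h = 1 := by
  intro h hh m hm hhm
  have hfix : ∀ g ∈ H, g ^ m = 1 → ∀ x : Bool, ap g [x] = [x] :=
    fun g hg hgm => hstab g (htf g hg ⟨m, hm, hgm ▸ N.one_mem⟩)
  exact ext_ap fun v => hss.ap_eq_self_of_pow_eq_one hfix v h hh hhm

/-- if `H ≤ Ω` is self-similar and `N ⊴ H` is contained in the
stabilizer of the first level, and `H/N` is torsion-free (no nontrivial coset has
finite order), then `H` is torsion-free. -/
theorem torsion_free_of_quotient (H : Subgroup TreeAut) (hss : SelfSimilar H)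
    (N : Subgroup TreeAut) (hNH : N ≤ H)
    (hnorm : ∀ h ∈ H, ∀ x ∈ N, h * x * h⁻¹ ∈ N)
    (hstab : ∀ x ∈ N, ∀ b : Bool, ap x [b] = [b])
    (htf : ∀ h ∈ H, (∃ m : ℕ, 0 < m ∧ h ^ m ∈ N) → h ∈ N) :
    ∀ h ∈ H, ∀ m : ℕ, 0 < m → h ^ m = 1 → h = 1 :=
  torsion_free_of_quotient_general H hss N hstab htf

end BinTree
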